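/- Let (t_n)_{n≥1} be a strictly decreasing sequence of positive reals with t_n → 0 such that the sequence of differences (t_n − t_{n+1})_{n≥1} is also decreasing, and assume (t_n) ∈ ℓ^{r,∞}(ℕ) for some r > 0. Let r_0 be the infimum of all r > 0 such that (t_n) ∈ ℓ^{r,∞}(ℕ). Then the Minkowski dimension of {t_n : n ≥ 1} equals r_0/(1+r_0). -/

import Mathlib

open MeasureTheory

/-- The `δ`-entropy number `N(E,δ) = #{k ∈ ℕ : E ∩ [kδ,(k+1)δ] ≠ ∅}`. -/
noncomputable def entropyNum (E : Set ℝ) (δ : ℝ) : ℕ :=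
  Set.ncard {k : ℕ | (E ∩ Set.Icc (k * δ) ((k + 1) * δ)).Nonempty}

/-- The (upper) Minkowski dimension of a bounded set `E ⊆ ℝ`. -/
noncomputable def minkowskiDim (E : Set ℝ) : ℝ :=
  sInf {a : ℝ | 0 < a ∧ ∃ C : ℝ, 0 < C ∧
    ∀ δ ∈ Set.Ioc (0 : ℝ) 1, (entropyNum E δ : ℝ) ≤ C * δ ^ (-a)}

/-- A sequence belongs to `ℓ^{r,∞}(ℕ)` if `#{n : |t_n| ≥ δ} ≤ N δ^{-r}` for all `δ > 0`. -/
def memLorentz (r : ℝ) (t : ℕ → ℝ) : Prop :=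
  ∃ N : ℝ, 0 < N ∧ ∀ δ : ℝ, 0 < δ →
    Set.encard {n : ℕ | δ ≤ |t n|} ≤ ENNReal.ofReal (N * δ ^ (-r))

/-!
Cover the points `t n ≥ T` one by one (there are at most `N T⁻ʳ` of them, each meeting two grid
cells) and `[0, T]` by `T / δ` cells; `T = δ ^ (1 + r)⁻¹` balances the two terms and gives
`N(E, δ) ≲ δ ^ (-r / (1 + r))`. Conversely, since the gaps decrease, `t 0, …, t (k + 1)` are
`δ`-separated for `δ = t k - t (k + 1)`, so `N(E, δ) ≥ k + 2`. A bound `N(E, δ) ≲ δ ^ (-a)` thus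
forces `t k - t (k + 1) ≲ k ^ (-1 / a)`, and summing the gaps, `t m ≲ m ^ (1 - 1 / a)`, i.e.
`t ∈ ℓ^{a / (1 - a), ∞}`. As `x ↦ x / (1 + x)` increases on `[0, ∞)`, both bounds pass to the
infima.
-/

open Set Filter Topology

lemma le_mul_rpow_neg_inv_of_le_mul_rpow_neg {x y a C : ℝ} (hx : 0 < x) (hy : 0 < y)
    (ha : 0 < a) (h : y ≤ C * x ^ (-a)) : x ≤ C ^ a⁻¹ * y ^ (-a⁻¹) := by
  have hxa : 0 < x ^ a := Real.rpow_pos_of_pos hx a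
  have hyxa : y * x ^ a ≤ C := by
    have := mul_le_mul_of_nonneg_right h hxa.le
    rwa [mul_assoc, ← Real.rpow_add hx, neg_add_cancel, Real.rpow_zero, mul_one] at this
  have hC : 0 ≤ C := (mul_pos hy hxa).le.trans hyxa
  calc x = (x ^ a) ^ a⁻¹ := (Real.rpow_rpow_inv hx.le ha.ne').symm
    _ ≤ (C / y) ^ a⁻¹ := by
        gcongr
        rw [le_div_iff₀ hy]
        linarith
    _ = C ^ a⁻¹ * y ^ (-a⁻¹) := by
        rw [Real.div_rpow hC hy.le, Real.rpow_neg hy.le, div_eq_mul_inv]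

lemma mul_rpow_neg_le_rpow_neg_sub {s x : ℝ} (hs : 0 < s) (hx : 0 < x) :
    s * (x + 1) ^ (-(s + 1)) ≤ x ^ (-s) - (x + 1) ^ (-s) := by
  have hne : ∀ u ∈ Icc x (x + 1), u ≠ 0 := fun u hu => (hx.trans_le hu.1).ne'
  obtain ⟨c, hc, hslope⟩ := exists_hasDerivAt_eq_slope (fun u => u ^ (-s))
    (fun u => -s * u ^ (-s - 1)) (lt_add_one x)
    (fun u hu => (Real.continuousAt_rpow_const u (-s) (.inl (hne u hu))).continuousWithinAt)
    (fun u hu => Real.hasDerivAt_rpow_const (.inl (hne u (Ioo_subset_Icc_self hu))))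
  rw [add_sub_cancel_left, div_one] at hslope
  have hmono : (x + 1) ^ (-s - 1) ≤ c ^ (-s - 1) :=
    Real.rpow_le_rpow_of_nonpos (hx.trans hc.1) hc.2.le (by linarith)
  rw [show -(s + 1) = -s - 1 by ring,
    show x ^ (-s) - (x + 1) ^ (-s) = s * c ^ (-s - 1) by linarith]
  exact mul_le_mul_of_nonneg_left hmono hs.le

lemma sum_range_rpow_neg_le {s x : ℝ} (hs : 0 < s) (hx : 0 < x) (n : ℕ) :
    ∑ i ∈ Finset.range n, (x + i + 1) ^ (-(s + 1)) ≤ s⁻¹ * x ^ (-s) := by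
  have hterm : ∀ i : ℕ, (x + i + 1) ^ (-(s + 1)) ≤
      s⁻¹ * ((x + i) ^ (-s) - (x + (i + 1 : ℕ)) ^ (-s)) := fun i => by
    rw [le_inv_mul_iff₀ hs, Nat.cast_succ, ← add_assoc]
    exact mul_rpow_neg_le_rpow_neg_sub hs (by positivity)
  calc ∑ i ∈ Finset.range n, (x + i + 1) ^ (-(s + 1))
      ≤ ∑ i ∈ Finset.range n, s⁻¹ * ((x + i) ^ (-s) - (x + (i + 1 : ℕ)) ^ (-s)) :=
        Finset.sum_le_sum fun i _ => hterm i
    _ = s⁻¹ * (x ^ (-s) - (x + n) ^ (-s)) := by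
        rw [← Finset.mul_sum, Finset.sum_range_sub' (fun i : ℕ => (x + i) ^ (-s)), Nat.cast_zero,
          add_zero]
    _ ≤ s⁻¹ * x ^ (-s) := by
        gcongr
        exact sub_le_self _ (Real.rpow_nonneg (by positivity) _)

lemma le_of_tendsto_zero_of_sub_succ_le {t : ℕ → ℝ} (hlim : Tendsto t atTop (𝓝 0)) {K s : ℝ}
    (hK : 0 ≤ K) (hs : 0 < s) (hgap : ∀ k : ℕ, t k - t (k + 1) ≤ K * ((k : ℝ) + 2) ^ (-(s + 1)))
    (m : ℕ) : t m ≤ K * s⁻¹ * ((m : ℝ) + 1) ^ (-s) := by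
  have hpartial : ∀ n, t m - t (m + n) ≤ K * s⁻¹ * ((m : ℝ) + 1) ^ (-s) := fun n =>
    calc t m - t (m + n) = ∑ i ∈ Finset.range n, (t (m + i) - t (m + i + 1)) :=
          (Finset.sum_range_sub' (fun i => t (m + i)) n).symm
      _ ≤ ∑ i ∈ Finset.range n, K * (((m : ℝ) + 1) + i + 1) ^ (-(s + 1)) :=
          Finset.sum_le_sum fun i _ => (hgap (m + i)).trans_eq (by push_cast; ring_nf)
      _ ≤ K * (s⁻¹ * ((m : ℝ) + 1) ^ (-s)) := by
          rw [← Finset.mul_sum]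
          exact mul_le_mul_of_nonneg_left (sum_range_rpow_neg_le hs (by positivity) n) hK
      _ = K * s⁻¹ * ((m : ℝ) + 1) ^ (-s) := (mul_assoc _ _ _).symm
  have hshift : Tendsto (fun n => t (m + n)) atTop (𝓝 0) :=
    hlim.comp (tendsto_atTop_mono (fun n => Nat.le_add_left n m) tendsto_id)
  linarith [ge_of_tendsto' hshift fun n => sub_le_comm.1 (hpartial n)]

lemma finite_setOf_entropyNum {E : Set ℝ} (hE : BddAbove E) {δ : ℝ} (hδ : 0 < δ) :
    {k : ℕ | (E ∩ Icc (k * δ) ((k + 1) * δ)).Nonempty}.Finite := by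
  obtain ⟨b, hb⟩ := hE
  refine (finite_Iic ⌊b / δ⌋₊).subset ?_
  rintro k ⟨x, hxE, hkx, -⟩
  exact Nat.le_floor ((le_div_iff₀ hδ).2 (hkx.trans (hb hxE)))

lemma ncard_le_entropyNum {E s : Set ℝ} (hE : BddAbove E) {δ : ℝ} (hδ : 0 < δ) (hsE : s ⊆ E)
    (hs : ∀ x ∈ s, 0 ≤ x) (hsep : s.Pairwise fun x y => δ ≤ |x - y|) :
    s.ncard ≤ entropyNum E δ := by
  have hfloor_lt : ∀ x ∈ s, ∀ y ∈ s, x < y → ⌊x / δ⌋₊ < ⌊y / δ⌋₊ := fun x hx y hy hxy => by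
    have hδxy : δ ≤ |x - y| := hsep hx hy hxy.ne
    rw [abs_sub_comm, abs_of_pos (sub_pos.2 hxy)] at hδxy
    have hsep' : x / δ + 1 ≤ y / δ := by
      rw [div_add_one hδ.ne', div_le_div_iff_of_pos_right hδ]
      linarith
    calc ⌊x / δ⌋₊ < ⌊x / δ⌋₊ + 1 := Nat.lt_succ_self _
      _ = ⌊x / δ + 1⌋₊ := (Nat.floor_add_one (div_nonneg (hs x hx) hδ.le)).symm
      _ ≤ ⌊y / δ⌋₊ := Nat.floor_le_floor hsep'
  refine ncard_le_ncard_of_injOn (fun x => ⌊x / δ⌋₊) (fun x hx => ?_) (fun x hx y hy hxy => ?_)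
    (finite_setOf_entropyNum hE hδ)
  · have hxδ : 0 ≤ x / δ := div_nonneg (hs x hx) hδ.le
    exact ⟨x, hsE hx, (le_div_iff₀ hδ).1 (Nat.floor_le hxδ),
      ((div_le_iff₀ hδ).1 (Nat.lt_floor_add_one _).le)⟩
  · by_contra hne
    rcases lt_or_gt_of_ne hne with h | h
    · exact (hfloor_lt x hx y hy h).ne hxy
    · exact (hfloor_lt y hy x hx h).ne' hxy

lemma entropyNum_le_of_finite_inter_Ici {E : Set ℝ} {δ T : ℝ} (hδ : 0 < δ) (hT : 0 ≤ T)
    (hfin : (E ∩ Ici T).Finite) :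
    (entropyNum E δ : ℝ) ≤ T / δ + 1 + 2 * (E ∩ Ici T).ncard := by
  set F := E ∩ Ici T
  have hcover : {k : ℕ | (E ∩ Icc (k * δ) ((k + 1) * δ)).Nonempty} ⊆
      Iic ⌊T / δ⌋₊ ∪ (fun x => ⌊x / δ⌋₊) '' F ∪ (fun x => ⌊x / δ⌋₊ - 1) '' F := by
    rintro k ⟨x, hxE, hkx, hxk⟩
    rcases lt_or_ge x T with hxT | hxT
    · exact .inl (.inl (Nat.le_floor ((le_div_iff₀ hδ).2 (hkx.trans hxT.le))))
    have hk : k ≤ ⌊x / δ⌋₊ := Nat.le_floor ((le_div_iff₀ hδ).2 hkx)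
    have hk' : ⌊x / δ⌋₊ ≤ k + 1 := Nat.floor_le_of_le (by push_cast; exact (div_le_iff₀ hδ).2 hxk)
    rcases hk.eq_or_lt with rfl | hlt
    · exact .inl (.inr ⟨x, ⟨hxE, hxT⟩, rfl⟩)
    · exact .inr ⟨x, ⟨hxE, hxT⟩, show ⌊x / δ⌋₊ - 1 = k by omega⟩
  have hcard : entropyNum E δ ≤ (⌊T / δ⌋₊ + 1) + F.ncard + F.ncard :=
    calc entropyNum E δ ≤ (Iic ⌊T / δ⌋₊ ∪ (fun x => ⌊x / δ⌋₊) '' F ∪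
          (fun x => ⌊x / δ⌋₊ - 1) '' F).ncard :=
          ncard_le_ncard hcover (((finite_Iic _).union (hfin.image _)).union (hfin.image _))
      _ ≤ (Iic ⌊T / δ⌋₊).ncard + ((fun x => ⌊x / δ⌋₊) '' F).ncard +
          ((fun x => ⌊x / δ⌋₊ - 1) '' F).ncard :=
          (ncard_union_le _ _).trans (add_le_add_left (ncard_union_le _ _) _)
      _ ≤ (⌊T / δ⌋₊ + 1) + F.ncard + F.ncard :=
          add_le_add (add_le_add (by simp) (ncard_image_le hfin)) (ncard_image_le hfin)
  have hfloor : (⌊T / δ⌋₊ : ℝ) ≤ T / δ := Nat.floor_le (div_nonneg hT hδ.le)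
  have : (entropyNum E δ : ℝ) ≤ (⌊T / δ⌋₊ + 1) + F.ncard + F.ncard := by exact_mod_cast hcard
  linarith

lemma finite_and_ncard_le_of_encard_le_ofReal {α : Type*} {s : Set α} {x : ℝ} (hx : 0 ≤ x)
    (h : (s.encard : ENNReal) ≤ ENNReal.ofReal x) : s.Finite ∧ (s.ncard : ℝ) ≤ x := by
  have hfin : s.Finite := by
    by_contra hinf
    simp [encard_eq_top_iff.2 hinf] at h
  refine ⟨hfin, ?_⟩
  rw [← hfin.cast_ncard_eq] at h
  simpa using ENNReal.toReal_le_of_le_ofReal hx h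

lemma entropyNum_range_le_of_memLorentz {r : ℝ} (hr : 0 ≤ r) {t : ℕ → ℝ} (ht : memLorentz r t) :
    ∃ C : ℝ, 0 < C ∧ ∀ δ ∈ Ioc (0 : ℝ) 1,
      (entropyNum (range t) δ : ℝ) ≤ C * δ ^ (-(r / (1 + r))) := by
  obtain ⟨N, hN, hcount⟩ := ht
  refine ⟨2 * N + 2, by positivity, fun δ ⟨hδ, hδ1⟩ => ?_⟩
  set a := r / (1 + r)
  -- the threshold `T` balances the `T / δ` cells below it against the `N T⁻ʳ` points above it
  set T := δ ^ (1 + r)⁻¹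
  have hT : 0 < T := Real.rpow_pos_of_pos hδ _
  have hTδ : T / δ = δ ^ (-a) := by
    rw [div_eq_mul_inv, ← Real.rpow_neg_one, ← Real.rpow_add hδ]
    congr 1
    simp only [a]
    field_simp
    ring
  have hTr : T ^ (-r) = δ ^ (-a) := by
    rw [← Real.rpow_mul hδ.le]
    congr 1
    simp only [a]
    field_simp
  have hone : 1 ≤ δ ^ (-a) :=
    Real.one_le_rpow_of_pos_of_le_one_of_nonpos hδ hδ1 (neg_nonpos.2 (by positivity))
  have hsub : range t ∩ Ici T ⊆ t '' {n | T ≤ |t n|} := by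
    rintro _ ⟨⟨n, rfl⟩, hn⟩
    exact ⟨n, (mem_Ici.1 hn).trans (le_abs_self _), rfl⟩
  obtain ⟨hfin, hncard⟩ := finite_and_ncard_le_of_encard_le_ofReal (by positivity)
    ((ENat.toENNReal_le.2 ((encard_le_encard hsub).trans (encard_image_le _ _))).trans
      (hcount T hT))
  calc (entropyNum (range t) δ : ℝ) ≤ T / δ + 1 + 2 * (range t ∩ Ici T).ncard :=
        entropyNum_le_of_finite_inter_Ici hδ hT.le hfin
    _ ≤ δ ^ (-a) + δ ^ (-a) + 2 * (N * δ ^ (-a)) := by rw [hTδ]; rw [hTr] at hncard; linarith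
    _ = (2 * N + 2) * δ ^ (-a) := by ring

-- with decreasing gaps, `t 0, …, t (k + 1)` are pairwise at least `t k - t (k + 1)` apart
lemma add_two_le_entropyNum_range {t : ℕ → ℝ} (hnonneg : ∀ n, 0 ≤ t n) (hanti : Antitone t)
    (hdiff : Antitone fun n => t n - t (n + 1)) {k : ℕ} {δ : ℝ} (hδ : 0 < δ)
    (hgap : δ ≤ t k - t (k + 1)) : k + 2 ≤ entropyNum (range t) δ := by
  have hsep : ∀ i j, i < j → j ≤ k + 1 → δ ≤ t i - t j := by
    intro i j hij hjk
    obtain ⟨j, rfl⟩ : ∃ j', j = j' + 1 := ⟨j - 1, by omega⟩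
    linarith [hgap.trans (hdiff (show j ≤ k by omega)), hanti (show i ≤ j by omega)]
  have hsep_abs : (Iic (k + 1)).Pairwise fun i j => δ ≤ |t i - t j| := by
    intro i hi j hj hne
    rcases lt_or_gt_of_ne hne with h | h
    · exact (hsep i j h hj).trans (le_abs_self _)
    · exact (hsep j i h hi).trans (abs_sub_comm (t i) (t j) ▸ le_abs_self _)
  have hinj : InjOn t (Iic (k + 1)) := fun i hi j hj hij => by
    by_contra hne
    linarith [hsep_abs hi hj hne, show |t i - t j| = 0 by simp [hij]]
  calc k + 2 = (t '' Iic (k + 1)).ncard := by simp [hinj.ncard_image]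
    _ ≤ entropyNum (range t) δ :=
      ncard_le_entropyNum ⟨t 0, by rintro _ ⟨n, rfl⟩; exact hanti (Nat.zero_le n)⟩ hδ
        (image_subset_range _ _) (by rintro _ ⟨n, -, rfl⟩; exact hnonneg n)
        (hinj.pairwise_image.2 hsep_abs)

lemma sub_succ_le_of_entropyNum_range_le {t : ℕ → ℝ} (hnonneg : ∀ n, 0 ≤ t n)
    (hanti : StrictAnti t) (hdiff : Antitone fun n => t n - t (n + 1)) {a C : ℝ} (ha : 0 < a)
    (hent : ∀ δ ∈ Ioc (0 : ℝ) 1, (entropyNum (range t) δ : ℝ) ≤ C * δ ^ (-a)) (k : ℕ) :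
    t k - t (k + 1) ≤ max (t 0 - t 1) 1 * C ^ a⁻¹ * ((k : ℝ) + 2) ^ (-a⁻¹) := by
  set d := t k - t (k + 1)
  have hd : 0 < d := sub_pos.2 (hanti (Nat.lt_succ_self k))
  -- `δ ≤ 1` is needed to apply `hent`; the cap costs at most the factor `max (t 0 - t 1) 1`
  set δ := min d 1 with hδ_def
  have hδ : 0 < δ := lt_min hd one_pos
  have hcount : k + 2 ≤ entropyNum (range t) δ :=
    add_two_le_entropyNum_range hnonneg hanti.antitone hdiff hδ (min_le_left _ _)
  have hcount' : (k : ℝ) + 2 ≤ C * δ ^ (-a) :=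
    le_trans (by exact_mod_cast hcount) (hent δ ⟨hδ, min_le_right _ _⟩)
  have hdδ : d ≤ max (t 0 - t 1) 1 * δ := by
    rcases le_total d 1 with h | h
    · rw [hδ_def, min_eq_left h]
      exact le_mul_of_one_le_left hd.le (le_max_right _ _)
    · rw [hδ_def, min_eq_right h, mul_one]
      exact (hdiff (Nat.zero_le k)).trans (le_max_left _ _)
  calc d ≤ max (t 0 - t 1) 1 * δ := hdδ
    _ ≤ max (t 0 - t 1) 1 * (C ^ a⁻¹ * ((k : ℝ) + 2) ^ (-a⁻¹)) :=
        mul_le_mul_of_nonneg_left (le_mul_rpow_neg_inv_of_le_mul_rpow_neg hδ (by positivity) ha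
          hcount') (zero_le_one.trans (le_max_right _ _))
    _ = max (t 0 - t 1) 1 * C ^ a⁻¹ * ((k : ℝ) + 2) ^ (-a⁻¹) := (mul_assoc _ _ _).symm

lemma memLorentz_inv_of_abs_le {t : ℕ → ℝ} {K s : ℝ} (hK : 0 < K) (hs : 0 < s)
    (h : ∀ n : ℕ, |t n| ≤ K * ((n : ℝ) + 1) ^ (-s)) : memLorentz s⁻¹ t := by
  refine ⟨K ^ s⁻¹, by positivity, fun δ hδ => ?_⟩
  set X := K ^ s⁻¹ * δ ^ (-s⁻¹)
  have hsub : {n | δ ≤ |t n|} ⊆ Iio ⌊X⌋₊ := fun n hn => by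
    have hn' : (n : ℝ) + 1 ≤ X := le_mul_rpow_neg_inv_of_le_mul_rpow_neg (by positivity) hδ hs
      ((show δ ≤ |t n| from hn).trans (h n))
    exact Nat.le_floor (by exact_mod_cast hn')
  calc (({n | δ ≤ |t n|}.encard : ℕ∞) : ENNReal) ≤ ((Iio ⌊X⌋₊).encard : ℕ∞) :=
        ENat.toENNReal_le.2 (encard_le_encard hsub)
    _ = ENNReal.ofReal ⌊X⌋₊ := by simp [encard_eq_coe_toFinset_card]
    _ ≤ ENNReal.ofReal X := ENNReal.ofReal_le_ofReal (Nat.floor_le (by positivity))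

lemma memLorentz_of_entropyNum_range_le {t : ℕ → ℝ} (hnonneg : ∀ n, 0 ≤ t n)
    (hanti : StrictAnti t) (hlim : Tendsto t atTop (𝓝 0))
    (hdiff : Antitone fun n => t n - t (n + 1)) {a C : ℝ} (ha0 : 0 < a) (ha1 : a < 1)
    (hC : 0 < C) (hent : ∀ δ ∈ Ioc (0 : ℝ) 1, (entropyNum (range t) δ : ℝ) ≤ C * δ ^ (-a)) :
    memLorentz (a / (1 - a)) t := by
  set s := a⁻¹ - 1
  have hs : 0 < s := sub_pos.2 ((one_lt_inv₀ ha0).2 ha1)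
  set K := max (t 0 - t 1) 1 * C ^ a⁻¹
  have hK : 0 < K := by positivity
  have hgap : ∀ k : ℕ, t k - t (k + 1) ≤ K * ((k : ℝ) + 2) ^ (-(s + 1)) := fun k => by
    rw [show s + 1 = a⁻¹ by ring]
    exact sub_succ_le_of_entropyNum_range_le hnonneg hanti hdiff ha0 hent k
  have hbound : ∀ n : ℕ, |t n| ≤ K * s⁻¹ * ((n : ℝ) + 1) ^ (-s) := fun n =>
    (abs_of_nonneg (hnonneg n)).trans_le (le_of_tendsto_zero_of_sub_succ_le hlim hK.le hs hgap n)
  convert memLorentz_inv_of_abs_le (by positivity) hs hbound using 1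
  simp only [s]
  field_simp

lemma monotoneOn_div_one_add : MonotoneOn (fun x : ℝ => x / (1 + x)) (Ici 0) :=
  fun x hx y hy hxy => by
    rw [div_le_div_iff₀ (by linarith [mem_Ici.1 hx]) (by linarith [mem_Ici.1 hy])]
    linarith

theorem stmt7 (t : ℕ → ℝ) (hpos : ∀ n, 0 < t n) (hanti : StrictAnti t)
    (hlim : Filter.Tendsto t Filter.atTop (nhds 0))
    (hdiff : Antitone fun n : ℕ => t n - t (n + 1))
    (hlor : ∃ r : ℝ, 0 < r ∧ memLorentz r t) :
    minkowskiDim (Set.range t) =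
      sInf {r : ℝ | 0 < r ∧ memLorentz r t} /
        (1 + sInf {r : ℝ | 0 < r ∧ memLorentz r t}) := by
  set S := {r : ℝ | 0 < r ∧ memLorentz r t}
  have hS : S.Nonempty := hlor
  have hS0 : S ⊆ Ici 0 := fun r hr => hr.1.le
  have hρ : 0 ≤ sInf S := Real.sInf_nonneg hS0
  have hexp : ∀ r ∈ S, r / (1 + r) ∈ {a : ℝ | 0 < a ∧ ∃ C : ℝ, 0 < C ∧
      ∀ δ ∈ Ioc (0 : ℝ) 1, (entropyNum (range t) δ : ℝ) ≤ C * δ ^ (-a)} := fun r hr =>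
    ⟨by have := hr.1; positivity, entropyNum_range_le_of_memLorentz hr.1.le hr.2⟩
  apply le_antisymm
  · calc minkowskiDim (range t) ≤ sInf ((fun x => x / (1 + x)) '' S) :=
          csInf_le_csInf ⟨0, fun a ha => ha.1.le⟩ (hS.image _) (image_subset_iff.2 hexp)
      _ = sInf S / (1 + sInf S) :=
          ((monotoneOn_div_one_add.mono hS0).map_csInf_of_continuousWithinAt
            (ContinuousAt.continuousWithinAt (by fun_prop (disch := positivity))) hS
            ⟨0, hS0⟩).symm
  · obtain ⟨r, hr⟩ := hlor
    refine le_csInf ⟨_, hexp r hr⟩ fun a ⟨ha, C, hC, hent⟩ => ?_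
    rcases lt_or_ge a 1 with ha1 | ha1
    · have hρa : sInf S ≤ a / (1 - a) := csInf_le ⟨0, hS0⟩
        ⟨by have := sub_pos.2 ha1; positivity, memLorentz_of_entropyNum_range_le
          (fun n => (hpos n).le) hanti hlim hdiff ha ha1 hC hent⟩
      rw [le_div_iff₀ (sub_pos.2 ha1)] at hρa
      rw [div_le_iff₀ (by linarith)]
      linarith
    · exact ((div_le_one (by linarith)).2 (by linarith)).trans ha1
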